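/- arXiv:2204.13474 — 5 statements merged into one kernel-verified Lean document; each statement's English description precedes it below -/
import Mathlib

section
/- Let Z ∈ ℝ^{r×r} with Sym(Z) = Ξ Λ Ξᵀ an orthogonal eigendecomposition, and let P(−Z) denote the projection of −Z onto the positive semidefinite cone, obtained by zeroing out the negative eigenvalues of Sym(−Z). Then J* := Skew(Z) and R* := P(−Z) minimize ‖Z − (J − R)‖_F over all skew-symmetric J and symmetric positive semidefinite R. -/
open Matrix Finset

noncomputable def frob {n m : ℕ} (A : Matrix (Fin n) (Fin m) ℝ) : ℝ :=
  Real.sqrt (Matrix.trace (Aᵀ * A))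

lemma tr_sq {r : ℕ} (A : Matrix (Fin r) (Fin r) ℝ) :
    Matrix.trace (Aᵀ * A) = ∑ j, ∑ i, (A i j)^2 := by
  simp [Matrix.trace, Matrix.mul_apply, Matrix.diag, sq]

lemma tr_sq_nonneg {r : ℕ} (A : Matrix (Fin r) (Fin r) ℝ) :
    0 ≤ Matrix.trace (Aᵀ * A) := by
  rw [tr_sq]
  positivity

lemma cross_zero {r : ℕ} (K S : Matrix (Fin r) (Fin r) ℝ)
    (hK : Kᵀ = -K) (hS : Sᵀ = S) : Matrix.trace (Kᵀ * S) = 0 := by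
  have h1 : Matrix.trace (Kᵀ * S) = Matrix.trace ((Kᵀ * S)ᵀ) := (Matrix.trace_transpose _).symm
  have h2 : (Kᵀ * S)ᵀ = Sᵀ * K := by rw [Matrix.transpose_mul, Matrix.transpose_transpose]
  have h3 : Matrix.trace (Sᵀ * K) = Matrix.trace (K * S) := by
    rw [hS, Matrix.trace_mul_comm]
  have h4 : Matrix.trace (Kᵀ * S) = -Matrix.trace (K * S) := by
    rw [hK, Matrix.neg_mul, Matrix.trace_neg]
  have h5 : Matrix.trace (Kᵀ * S) = Matrix.trace (K * S) := by
    rw [h1, h2, h3]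
  linarith
  
lemma pythag {r : ℕ} (K S : Matrix (Fin r) (Fin r) ℝ)
    (hK : Kᵀ = -K) (hS : Sᵀ = S) :
    Matrix.trace ((K + S)ᵀ * (K + S)) =
      Matrix.trace (Kᵀ * K) + Matrix.trace (Sᵀ * S) := by
  have hc := cross_zero K S hK hS
  have hc' : Matrix.trace (Sᵀ * K) = 0 := by
    rw [← Matrix.trace_transpose (Sᵀ * K), Matrix.transpose_mul, Matrix.transpose_transpose]
    exact hc
  rw [Matrix.transpose_add, Matrix.add_mul, Matrix.mul_add, Matrix.mul_add,
    Matrix.trace_add, Matrix.trace_add, Matrix.trace_add, hc, hc']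
  ring

theorem skew_psd_procrustes (r : ℕ) (Z : Matrix (Fin r) (Fin r) ℝ)
    (Ξ : Matrix (Fin r) (Fin r) ℝ) (Λ : Fin r → ℝ)
    (hΞ : Ξᵀ * Ξ = 1)
    (hdecomp : (1/2 : ℝ) • ((-Z) + (-Z)ᵀ) = Ξ * Matrix.diagonal Λ * Ξᵀ)
    (Jstar Rstar : Matrix (Fin r) (Fin r) ℝ)
    (hJstar : Jstar = (1/2 : ℝ) • (Z - Zᵀ))
    (hRstar : Rstar = Ξ * Matrix.diagonal (fun i => max (Λ i) 0) * Ξᵀ) :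
    ∀ J R : Matrix (Fin r) (Fin r) ℝ, J = -Jᵀ → R.PosSemidef →
      frob (Z - (Jstar - Rstar)) ≤ frob (Z - (J - R)) := by
  intro J R hJ hR
  have hΞΞ : Ξ * Ξᵀ = 1 := mul_eq_one_comm.mp hΞ
  have hRt : Rᵀ = R := by
    have := hR.isHermitian.eq
    rwa [Matrix.conjTranspose_eq_transpose_of_trivial] at this
  have hJt : Jᵀ = -J := by nth_rewrite 2 [hJ]; simp
  set S0 : Matrix (Fin r) (Fin r) ℝ := (1/2 : ℝ) • (Z + Zᵀ) with hS0
  have hS0sym : S0ᵀ = S0 := by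
    simp [hS0, Matrix.transpose_smul, Matrix.transpose_add, add_comm]
  have hS0eq : S0 = -(Ξ * Matrix.diagonal Λ * Ξᵀ) := by
    rw [← hdecomp]
    simp [hS0, Matrix.transpose_neg]
    module
  have hZ : Z = Jstar + S0 := by
    rw [hJstar, hS0]
    module
  have hleft : Z - (Jstar - Rstar) = S0 + Rstar := by rw [hZ]; abel
  have hright : Z - (J - R) = (Jstar - J) + (S0 + R) := by rw [hZ]; abel
  set S : Matrix (Fin r) (Fin r) ℝ := Ξᵀ * R * Ξ with hSdef
  have hSpsd : S.PosSemidef := by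
    have := hR.conjTranspose_mul_mul_same Ξ
    rwa [Matrix.conjTranspose_eq_transpose_of_trivial] at this
  have hSdiag : ∀ j, 0 ≤ S j j := by
    intro j
    exact hSpsd.diag_nonneg
  have hRS : R = Ξ * S * Ξᵀ := by
    rw [hSdef]
    rw [show Ξ * (Ξᵀ * R * Ξ) * Ξᵀ = (Ξ * Ξᵀ) * R * (Ξ * Ξᵀ) by
      simp [Matrix.mul_assoc], hΞΞ]
    simp
  have hconj : S0 + R = Ξ * (S - Matrix.diagonal Λ) * Ξᵀ := by
    rw [hS0eq]
    nth_rewrite 1 [hRS]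
    rw [Matrix.mul_sub, Matrix.sub_mul]
    abel
  have hconjstar : S0 + Rstar =
      Ξ * (Matrix.diagonal (fun i => max (Λ i) 0 - Λ i)) * Ξᵀ := by
    rw [hS0eq, hRstar]
    rw [show (Matrix.diagonal (fun i => max (Λ i) 0 - Λ i) : Matrix (Fin r) (Fin r) ℝ)
      = Matrix.diagonal (fun i => max (Λ i) 0) - Matrix.diagonal Λ by
        rw [Matrix.diagonal_sub]]
    rw [Matrix.mul_sub, Matrix.sub_mul]
    abel
  have hinv : ∀ M : Matrix (Fin r) (Fin r) ℝ,
      Matrix.trace ((Ξ * M * Ξᵀ)ᵀ * (Ξ * M * Ξᵀ)) = Matrix.trace (Mᵀ * M) := by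
    intro M
    have key : (Ξ * M * Ξᵀ)ᵀ * (Ξ * M * Ξᵀ) = Ξ * (Mᵀ * (Ξᵀ * Ξ) * M) * Ξᵀ := by
      simp only [Matrix.transpose_mul, Matrix.transpose_transpose, Matrix.mul_assoc]
    rw [key, hΞ, Matrix.mul_one, Matrix.trace_mul_cycle, ← Matrix.mul_assoc, hΞ,
      Matrix.one_mul]
  have hmain : Matrix.trace ((Z - (Jstar - Rstar))ᵀ * (Z - (Jstar - Rstar)))
      ≤ Matrix.trace ((Z - (J - R))ᵀ * (Z - (J - R))) := by
    rw [hleft, hright]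
    have hJstart : Jstarᵀ = -Jstar := by
      rw [hJstar]
      ext i k
      simp [Matrix.smul_apply, Matrix.sub_apply, Matrix.transpose_apply, Matrix.neg_apply]
      ring
    have hskew : (Jstar - J)ᵀ = -(Jstar - J) := by
      rw [Matrix.transpose_sub, hJt, hJstart]; abel
    have hsym : (S0 + R)ᵀ = S0 + R := by
      rw [Matrix.transpose_add, hS0sym, hRt]
    rw [pythag _ _ hskew hsym]
    have h1 : Matrix.trace ((S0 + Rstar)ᵀ * (S0 + Rstar))
        ≤ Matrix.trace ((S0 + R)ᵀ * (S0 + R)) := by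
      rw [hconj, hconjstar, hinv, hinv, tr_sq, tr_sq]
      have hterm : ∀ j : Fin r,
          (Matrix.diagonal (fun i => max (Λ i) 0 - Λ i) : Matrix (Fin r) (Fin r) ℝ) j j ^ 2
          ≤ ∑ i, ((S - Matrix.diagonal Λ) i j)^2 := by
        intro j
        have hdd : ((S - Matrix.diagonal Λ) j j)^2
            ≤ ∑ i, ((S - Matrix.diagonal Λ) i j)^2 :=
          Finset.single_le_sum (f := fun i => ((S - Matrix.diagonal Λ) i j)^2)
            (fun i _ => sq_nonneg _) (Finset.mem_univ j)
        refine le_trans ?_ hdd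
        simp only [Matrix.diagonal_apply_eq, Matrix.sub_apply]
        have hs := hSdiag j
        rcases le_or_gt (Λ j) 0 with h | h
        · rw [max_eq_right h]
          nlinarith
        · rw [max_eq_left h.le]
          nlinarith
      calc ∑ j, ∑ i, ((Matrix.diagonal (fun i => max (Λ i) 0 - Λ i) : Matrix (Fin r) (Fin r) ℝ) i j)^2
          = ∑ j, ((Matrix.diagonal (fun i => max (Λ i) 0 - Λ i) : Matrix (Fin r) (Fin r) ℝ) j j)^2 := by
            refine Finset.sum_congr rfl fun j _ => ?_
            rw [Finset.sum_eq_single j]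
            · intro i _ hij
              simp [Matrix.diagonal_apply_ne _ hij]
            · intro h; exact absurd (Finset.mem_univ j) h
        _ ≤ ∑ j, ∑ i, ((S - Matrix.diagonal Λ) i j)^2 :=
            Finset.sum_le_sum fun j _ => hterm j
    have h2 : 0 ≤ Matrix.trace ((Jstar - J)ᵀ * (Jstar - J)) := tr_sq_nonneg _
    linarith
  exact Real.sqrt_le_sqrt hmain
end

section
/- For a symmetric real n×n matrix S with eigendecomposition S = Ξ diag(Λ₊, Λ₋) Ξᵀ (Λ₊ nonnegative eigenvalues, Λ₋ negative eigenvalues, Ξ orthogonal), the matrix P(S) = Ξ diag(Λ₊, 0) Ξᵀ is the unique symmetric positive semidefinite matrix minimizing ‖S − R‖_F over all symmetric positive semidefinite R, with minimal value ‖Λ₋‖_F. -/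
open Matrix

private lemma trace_sq_eq {n : ℕ} (A : Matrix (Fin n) (Fin n) ℝ) :
    Matrix.trace (Aᵀ * A) = ∑ j, ∑ i, (A i j)^2 := by
  simp [Matrix.trace, Matrix.mul_apply, Matrix.diag, sq]

private lemma conj_mul_eq {n : ℕ} (Ξ M : Matrix (Fin n) (Fin n) ℝ) (hΞ : Ξᵀ * Ξ = 1) :
    (Ξ*M*Ξᵀ)ᵀ * (Ξ*M*Ξᵀ) = Ξ * (Mᵀ * M) * Ξᵀ := by
  have h : ∀ X : Matrix (Fin n) (Fin n) ℝ, Ξᵀ * (Ξ * X) = X := fun X => by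
    rw [← Matrix.mul_assoc, hΞ, Matrix.one_mul]
  simp [Matrix.transpose_mul, Matrix.mul_assoc, h]

private lemma trace_conj {n : ℕ} (Ξ X : Matrix (Fin n) (Fin n) ℝ) (hΞ : Ξᵀ * Ξ = 1) :
    Matrix.trace (Ξ * X * Ξᵀ) = Matrix.trace X := by
  rw [Matrix.trace_mul_cycle, hΞ, Matrix.one_mul]

private lemma trace_conj_sq {n : ℕ} (Ξ M : Matrix (Fin n) (Fin n) ℝ) (hΞ : Ξᵀ * Ξ = 1) :
    Matrix.trace ((Ξ*M*Ξᵀ)ᵀ * (Ξ*M*Ξᵀ)) = ∑ j, ∑ i, (M i j)^2 := by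
  rw [conj_mul_eq Ξ M hΞ, trace_conj _ _ hΞ, trace_sq_eq]

private lemma min_sq_le (a b : ℝ) (hb : 0 ≤ b) : (min a 0)^2 ≤ (a - b)^2 := by
  rcases le_or_gt 0 a with h | h
  · simp [min_eq_right h]; positivity
  · rw [min_eq_left h.le]; nlinarith

private lemma eq_max_of_sq_eq (a b : ℝ) (hb : 0 ≤ b) (h : (a-b)^2 = (min a 0)^2) :
    b = max a 0 := by
  rcases le_or_gt 0 a with h' | h'
  · rw [min_eq_right h'] at h; rw [max_eq_left h']; nlinarith
  · rw [min_eq_left h'.le] at h; rw [max_eq_right h'.le]; nlinarith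

theorem psd_projection_is_nearest (n : ℕ) (S : Matrix (Fin n) (Fin n) ℝ) (hS : S = Sᵀ)
    (Ξ : Matrix (Fin n) (Fin n) ℝ) (Λ : Fin n → ℝ)
    (hΞ : Ξᵀ * Ξ = 1) (hdecomp : S = Ξ * Matrix.diagonal Λ * Ξᵀ)
    (P : Matrix (Fin n) (Fin n) ℝ)
    (hP : P = Ξ * Matrix.diagonal (fun i => max (Λ i) 0) * Ξᵀ) :
    P.PosSemidef ∧
    (∀ R : Matrix (Fin n) (Fin n) ℝ, R.PosSemidef → frob (S - P) ≤ frob (S - R)) ∧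
    (∀ R : Matrix (Fin n) (Fin n) ℝ, R.PosSemidef → frob (S - R) = frob (S - P) → R = P) ∧
    frob (S - P) = Real.sqrt (∑ i, (min (Λ i) 0) ^ 2) := by
  have hΞΞ : Ξ * Ξᵀ = 1 := mul_eq_one_comm.mp hΞ
  -- S - P = Ξ * diagonal (min Λ 0) * Ξᵀ
  have hSP : S - P = Ξ * Matrix.diagonal (fun i => min (Λ i) 0) * Ξᵀ := by
    have hfun : Matrix.diagonal Λ - Matrix.diagonal (fun i => max (Λ i) 0)
        = Matrix.diagonal (fun i => min (Λ i) 0) := by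
      ext i j
      rcases eq_or_ne i j with rfl | h
      · have := max_add_min (Λ i) 0
        simp only [add_zero] at this
        simp only [Matrix.sub_apply, Matrix.diagonal_apply_eq]
        linarith
      · simp [Matrix.diagonal_apply_ne _ h]
    rw [hdecomp, hP, ← Matrix.sub_mul, ← Matrix.mul_sub, hfun]
  -- trace of (S-P)ᵀ(S-P)
  have htrP : Matrix.trace ((S-P)ᵀ * (S-P)) = ∑ i, (min (Λ i) 0)^2 := by
    rw [hSP, trace_conj_sq _ _ hΞ]
    rw [Finset.sum_comm]
    refine Finset.sum_congr rfl fun i _ => ?_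
    rw [Finset.sum_eq_single i]
    · simp [Matrix.diagonal_apply_eq]
    · intro j _ hji
      simp [Matrix.diagonal_apply_ne' _ hji]
    · simp
  refine ⟨?_, ?_, ?_, ?_⟩
  · -- P is PSD
    rw [hP]
    have hmax : (Matrix.diagonal (fun i => max (Λ i) 0)).PosSemidef :=
      Matrix.posSemidef_diagonal_iff.mpr fun i => le_max_right _ _
    have := hmax.mul_mul_conjTranspose_same Ξ
    simpa [Matrix.conjTranspose_eq_transpose_of_trivial] using this
  · -- minimality
    intro R hR
    unfold frob
    apply Real.sqrt_le_sqrt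
    rw [htrP]
    set B := Ξᵀ * R * Ξ with hBdef
    have hRB : R = Ξ * B * Ξᵀ := by
      rw [hBdef, ← Matrix.mul_assoc, ← Matrix.mul_assoc, hΞΞ, Matrix.one_mul,
        Matrix.mul_assoc, hΞΞ, Matrix.mul_one]
    have hBpsd : B.PosSemidef := by
      have := hR.conjTranspose_mul_mul_same Ξ
      simpa [Matrix.conjTranspose_eq_transpose_of_trivial] using this
    have hSR : S - R = Ξ * (Matrix.diagonal Λ - B) * Ξᵀ := by
      rw [hdecomp, hRB, ← Matrix.sub_mul, ← Matrix.mul_sub]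
    rw [hSR, trace_conj_sq _ _ hΞ]
    refine Finset.sum_le_sum fun j _ => ?_
    have hdiag : 0 ≤ B j j := by
      have := hBpsd.diag_nonneg (i := j)
      simpa [dotProduct, Matrix.mulVec, Pi.single_apply] using this
    calc (min (Λ j) 0)^2 ≤ ((Matrix.diagonal Λ - B) j j)^2 := by
          simpa [Matrix.sub_apply, Matrix.diagonal_apply_eq] using min_sq_le (Λ j) (B j j) hdiag
      _ ≤ ∑ i, ((Matrix.diagonal Λ - B) i j)^2 :=
          Finset.single_le_sum (f := fun i => ((Matrix.diagonal Λ - B) i j)^2)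
            (fun i _ => sq_nonneg _) (Finset.mem_univ j)
  · -- uniqueness
    intro R hR heq
    set B := Ξᵀ * R * Ξ with hBdef
    have hRB : R = Ξ * B * Ξᵀ := by
      rw [hBdef, ← Matrix.mul_assoc, ← Matrix.mul_assoc, hΞΞ, Matrix.one_mul,
        Matrix.mul_assoc, hΞΞ, Matrix.mul_one]
    have hBpsd : B.PosSemidef := by
      have := hR.conjTranspose_mul_mul_same Ξ
      simpa [Matrix.conjTranspose_eq_transpose_of_trivial] using this
    have hBd : ∀ j, 0 ≤ B j j := by
      intro j
      have := hBpsd.diag_nonneg (i := j)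
      simpa [dotProduct, Matrix.mulVec, Pi.single_apply] using this
    have hSR : S - R = Ξ * (Matrix.diagonal Λ - B) * Ξᵀ := by
      rw [hdecomp, hRB, ← Matrix.sub_mul, ← Matrix.mul_sub]
    have htrR : Matrix.trace ((S-R)ᵀ * (S-R))
        = ∑ j, ∑ i, ((Matrix.diagonal Λ - B) i j)^2 := by
      rw [hSR, trace_conj_sq _ _ hΞ]
    -- traces are equal
    have htreq : ∑ j, ∑ i, ((Matrix.diagonal Λ - B) i j)^2 = ∑ j, (min (Λ j) 0)^2 := by
      have h1 : 0 ≤ ∑ j, ∑ i, ((Matrix.diagonal Λ - B) i j)^2 :=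
        Finset.sum_nonneg fun j _ => Finset.sum_nonneg fun i _ => sq_nonneg _
      have h2 : 0 ≤ ∑ j, (min (Λ j) 0)^2 := Finset.sum_nonneg fun j _ => sq_nonneg _
      unfold frob at heq
      rw [htrR, htrP] at heq
      exact (Real.sqrt_inj h1 h2).mp heq
    -- per-column lower bounds
    have hlb : ∀ j ∈ Finset.univ, (min (Λ j) 0)^2 ≤ ∑ i, ((Matrix.diagonal Λ - B) i j)^2 := by
      intro j _
      calc (min (Λ j) 0)^2 ≤ ((Matrix.diagonal Λ - B) j j)^2 := by
            simpa [Matrix.sub_apply, Matrix.diagonal_apply_eq] using min_sq_le (Λ j) (B j j) (hBd j)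
        _ ≤ ∑ i, ((Matrix.diagonal Λ - B) i j)^2 :=
            Finset.single_le_sum (f := fun i => ((Matrix.diagonal Λ - B) i j)^2)
              (fun i _ => sq_nonneg _) (Finset.mem_univ j)
    have hcols : ∀ j, ∑ i, ((Matrix.diagonal Λ - B) i j)^2 = (min (Λ j) 0)^2 := by
      intro j
      have := (Finset.sum_eq_sum_iff_of_le hlb).mp htreq.symm j (Finset.mem_univ j)
      exact this.symm
    -- extract per-entry equalities
    have hB : B = Matrix.diagonal (fun i => max (Λ i) 0) := by
      ext i j
      have hcol := hcols j
      have hsplit := Finset.add_sum_erase Finset.univ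
        (fun i => ((Matrix.diagonal Λ - B) i j)^2) (Finset.mem_univ j)
      beta_reduce at hsplit
      have hrest : 0 ≤ ∑ i ∈ Finset.univ.erase j, ((Matrix.diagonal Λ - B) i j)^2 :=
        Finset.sum_nonneg fun i _ => sq_nonneg _
      have hdiaglb : (min (Λ j) 0)^2 ≤ ((Matrix.diagonal Λ - B) j j)^2 := by
        simpa [Matrix.sub_apply, Matrix.diagonal_apply_eq] using min_sq_le (Λ j) (B j j) (hBd j)
      have hdiageq : ((Matrix.diagonal Λ - B) j j)^2 = (min (Λ j) 0)^2 := by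
        rw [← hsplit] at hcol; linarith
      have hresteq : ∑ i ∈ Finset.univ.erase j, ((Matrix.diagonal Λ - B) i j)^2 = 0 := by
        rw [← hsplit] at hcol; linarith
      rcases eq_or_ne i j with rfl | hij
      · -- diagonal entry
        have : (Λ i - B i i)^2 = (min (Λ i) 0)^2 := by
          simpa [Matrix.sub_apply, Matrix.diagonal_apply_eq] using hdiageq
        have := eq_max_of_sq_eq (Λ i) (B i i) (hBd i) this
        simpa [Matrix.diagonal_apply_eq] using this
      · -- off-diagonal entry
        have hz := (Finset.sum_eq_zero_iff_of_nonneg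
          (fun i _ => sq_nonneg ((Matrix.diagonal Λ - B) i j))).mp hresteq i
          (Finset.mem_erase.mpr ⟨hij, Finset.mem_univ i⟩)
        have : (Matrix.diagonal Λ - B) i j = 0 := by
          exact (pow_eq_zero_iff two_ne_zero).mp hz
        rw [Matrix.sub_apply, Matrix.diagonal_apply_ne _ hij] at this
        rw [Matrix.diagonal_apply_ne _ hij]
        linarith
    rw [hRB, hB, hP]
  · -- value of the minimum
    unfold frob
    rw [htrP]
end

section
/- Consider the discrete-time port-Hamiltonian system H(x_{i+1} − x_i)/δ = (J − R)(x_{i+1}+x_i)/2 + (G − P)(u_{i+1}+u_i)/2 and (y_{i+1}+y_i)/2 = (G + P)ᵀ (x_{i+1}+x_i)/2 + (S − N)(u_{i+1}+u_i)/2, with H symmetric positive definite, J = −Jᵀ, N = −Nᵀ, and [[R, P],[Pᵀ, S]] symmetric positive semidefinite, and δ > 0. Then the discrete dissipation inequality (H(x_{i+1}) − H(x_i))/δ ≤ ((y_{i+1}+y_i)/2)ᵀ ((u_{i+1}+u_i)/2) holds, where H(x) = ½ xᵀ H x. -/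
open Matrix

lemma skew_dot (k : ℕ) (A : Matrix (Fin k) (Fin k) ℝ) (hA : A = -Aᵀ)
    (z : Fin k → ℝ) : z ⬝ᵥ A *ᵥ z = 0 := by
  have h1 : z ⬝ᵥ Aᵀ *ᵥ z = z ⬝ᵥ A *ᵥ z := by
    rw [Matrix.mulVec_transpose, Matrix.dotProduct_mulVec, dotProduct_comm]
  have h2 : z ⬝ᵥ A *ᵥ z = -(z ⬝ᵥ Aᵀ *ᵥ z) := by
    nth_rewrite 1 [hA]
    simp [Matrix.neg_mulVec]
  linarith [h1, h2]

lemma sym_dot (k : ℕ) (A : Matrix (Fin k) (Fin k) ℝ) (hA : Aᵀ = A)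
    (a b : Fin k → ℝ) : a ⬝ᵥ A *ᵥ b = b ⬝ᵥ A *ᵥ a := by
  rw [Matrix.dotProduct_mulVec, dotProduct_comm, ← Matrix.mulVec_transpose, hA]

lemma trans_dot (k l : ℕ) (A : Matrix (Fin k) (Fin l) ℝ)
    (a : Fin k → ℝ) (b : Fin l → ℝ) : b ⬝ᵥ Aᵀ *ᵥ a = a ⬝ᵥ A *ᵥ b := by
  rw [Matrix.dotProduct_mulVec, dotProduct_comm, ← Matrix.mulVec_transpose,
    Matrix.transpose_transpose]

theorem discrete_pH_dissipation_inequality (n m : ℕ)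
    (H J R : Matrix (Fin n) (Fin n) ℝ)
    (G P : Matrix (Fin n) (Fin m) ℝ) (S N : Matrix (Fin m) (Fin m) ℝ)
    (hH : H.PosDef) (hJ : J = -Jᵀ) (hN : N = -Nᵀ)
    (hW : (Matrix.fromBlocks R P Pᵀ S).PosSemidef)
    (δ : ℝ) (hδ : 0 < δ)
    (x0 x1 : Fin n → ℝ) (u0 u1 y0 y1 : Fin m → ℝ)
    (hdyn : H *ᵥ ((1/δ : ℝ) • (x1 - x0))
      = (J - R) *ᵥ ((1/2 : ℝ) • (x1 + x0)) + (G - P) *ᵥ ((1/2 : ℝ) • (u1 + u0)))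
    (hout : (1/2 : ℝ) • (y1 + y0)
      = (G + P)ᵀ *ᵥ ((1/2 : ℝ) • (x1 + x0)) + (S - N) *ᵥ ((1/2 : ℝ) • (u1 + u0))) :
    ((1/2) * (x1 ⬝ᵥ H *ᵥ x1) - (1/2) * (x0 ⬝ᵥ H *ᵥ x0)) / δ
      ≤ ((1/2 : ℝ) • (y1 + y0)) ⬝ᵥ ((1/2 : ℝ) • (u1 + u0)) := by
  set z : Fin n → ℝ := (1/2 : ℝ) • (x1 + x0) with hz
  set w : Fin m → ℝ := (1/2 : ℝ) • (u1 + u0) with hwdef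
  set v : Fin n → ℝ := (1/δ : ℝ) • (x1 - x0) with hv
  have hHsym : Hᵀ = H := hH.1
  -- PSD inequality
  have hpsd := hW.dotProduct_mulVec_nonneg (Sum.elim z w)
  rw [show (star (Sum.elim z w)) = Sum.elim z w from rfl,
    Matrix.fromBlocks_mulVec, sumElim_dotProduct_sumElim] at hpsd
  simp only [Sum.elim_comp_inl, Sum.elim_comp_inr] at hpsd
  simp only [dotProduct_add] at hpsd
  have hPt : w ⬝ᵥ Pᵀ *ᵥ z = z ⬝ᵥ P *ᵥ w := trans_dot n m P z w
  -- LHS = z ⬝ᵥ H *ᵥ v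
  have hcross : x0 ⬝ᵥ H *ᵥ x1 = x1 ⬝ᵥ H *ᵥ x0 := sym_dot n H hHsym x0 x1
  have hlhs : ((1/2) * (x1 ⬝ᵥ H *ᵥ x1) - (1/2) * (x0 ⬝ᵥ H *ᵥ x0)) / δ
      = z ⬝ᵥ H *ᵥ v := by
    rw [hz, hv]
    simp only [Matrix.mulVec_smul, smul_dotProduct, dotProduct_smul,
      Matrix.mulVec_sub, Matrix.mulVec_add, dotProduct_sub, add_dotProduct,
      smul_eq_mul]
    field_simp
    ring_nf
    rw [hcross]
    ring
  -- use dynamics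
  have hdyn' : z ⬝ᵥ H *ᵥ v = z ⬝ᵥ J *ᵥ z - z ⬝ᵥ R *ᵥ z + (z ⬝ᵥ G *ᵥ w - z ⬝ᵥ P *ᵥ w) := by
    rw [hdyn]
    simp [Matrix.sub_mulVec, dotProduct_add, dotProduct_sub]
  have hJz : z ⬝ᵥ J *ᵥ z = 0 := skew_dot n J hJ z
  have hNw : w ⬝ᵥ N *ᵥ w = 0 := skew_dot m N hN w
  -- output
  have hout' : ((1/2 : ℝ) • (y1 + y0)) ⬝ᵥ w
      = z ⬝ᵥ G *ᵥ w + z ⬝ᵥ P *ᵥ w + (w ⬝ᵥ S *ᵥ w - w ⬝ᵥ N *ᵥ w) := by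
    rw [hout]
    have h1 : ((G + P)ᵀ *ᵥ z) ⬝ᵥ w = z ⬝ᵥ (G + P) *ᵥ w := by
      rw [dotProduct_comm]; exact trans_dot n m (G + P) z w
    simp only [add_dotProduct, h1, Matrix.sub_mulVec, dotProduct_sub,
      Matrix.add_mulVec, dotProduct_add]
    simp only [sub_dotProduct]
    rw [dotProduct_comm (S *ᵥ w) w, dotProduct_comm (N *ᵥ w) w]
  rw [hlhs, hdyn', hout']
  rw [hPt] at hpsd
  linarith
end

section
/- Let T, Z ∈ ℝ^{ñ×M}, let T = V₁Σ₁W₁ᵀ be the skinny SVD of T with r = rank(T), V₁ ∈ ℝ^{ñ×r}, Σ₁ invertible diagonal r×r, W₁ ∈ ℝ^{M×r}, and let W₂ complete W₁ to an orthogonal M×M matrix [W₁ W₂]. Set Z̃₁ = Σ₁V₁ᵀZW₁ and Z̃₂ = Σ₁V₁ᵀZW₂. Define J* = V₁Σ₁⁻¹ Skew(Z̃₁) Σ₁⁻¹ V₁ᵀ and R* = V₁Σ₁⁻¹ P(−Z̃₁) Σ₁⁻¹ V₁ᵀ, where P denotes the projection onto the PSD cone. Then J* is skew-symmetric, R* is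 symmetric positive semidefinite, and they minimize ‖Tᵀ(Z − (J − R)T)‖_F over all skew-symmetric J and PSD R, with minimal squared value ‖Z̃₂‖_F² + ‖Λ₊‖_F² where Λ₊ contains the positive eigenvalues of Sym(Z̃₁). -/
open Matrix

lemma trace_tmul_nonneg {n m : ℕ} (A : Matrix (Fin n) (Fin m) ℝ) :
    0 ≤ Matrix.trace (Aᵀ * A) := by
  rw [Matrix.trace]
  refine Finset.sum_nonneg fun j _ => ?_
  simp only [Matrix.diag_apply, Matrix.mul_apply, Matrix.transpose_apply]
  exact Finset.sum_nonneg fun i _ => mul_self_nonneg _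

lemma trace_tmul_eq_sum {n m : ℕ} (A : Matrix (Fin n) (Fin m) ℝ) :
    Matrix.trace (Aᵀ * A) = ∑ j, ∑ i, (A i j)^2 := by
  simp [Matrix.trace, Matrix.diag_apply, Matrix.mul_apply, sq]

lemma frob_sq {n m : ℕ} (A : Matrix (Fin n) (Fin m) ℝ) :
    frob A ^ 2 = Matrix.trace (Aᵀ * A) :=
  Real.sq_sqrt (trace_tmul_nonneg A)

lemma psd_diag_nonneg {r : ℕ} {P : Matrix (Fin r) (Fin r) ℝ} (hP : P.PosSemidef)
    (i : Fin r) : 0 ≤ P i i := by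
  exact hP.diag_nonneg

lemma trace_sym_skew {r : ℕ} (S K : Matrix (Fin r) (Fin r) ℝ)
    (hS : Sᵀ = S) (hK : Kᵀ = -K) :
    Matrix.trace ((S + K)ᵀ * (S + K))
      = Matrix.trace (Sᵀ * S) + Matrix.trace (Kᵀ * K) := by
  have hc : Matrix.trace (K * S) = Matrix.trace (S * K) := Matrix.trace_mul_comm K S
  rw [transpose_add, Matrix.add_mul, Matrix.mul_add, Matrix.mul_add, Matrix.trace_add,
    Matrix.trace_add, Matrix.trace_add]
  have h1 : Matrix.trace (Sᵀ * K) = Matrix.trace (S * K) := by rw [hS]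
  have h2 : Matrix.trace (Kᵀ * S) = -Matrix.trace (S * K) := by
    rw [hK, Matrix.neg_mul, Matrix.trace_neg, hc]
  linarith

/-- Lower bound for ‖Ξ diag(μ) Ξᵀ + Y‖² over PSD `Y`. -/
lemma psd_bound {r : ℕ} (Ξ : Matrix (Fin r) (Fin r) ℝ) (μ : Fin r → ℝ)
    (hΞ : Ξᵀ * Ξ = 1) (Y : Matrix (Fin r) (Fin r) ℝ) (hY : Y.PosSemidef) :
    ∑ i, max (μ i) 0 ^ 2
      ≤ Matrix.trace ((Ξ * Matrix.diagonal μ * Ξᵀ + Y)ᵀ *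
          (Ξ * Matrix.diagonal μ * Ξᵀ + Y)) := by
  have hΞ' : Ξ * Ξᵀ = 1 := mul_eq_one_comm.mp hΞ
  set S := Ξ * Matrix.diagonal μ * Ξᵀ + Y with hSdef
  set Y' := Ξᵀ * Y * Ξ with hY'def
  have hY' : Y'.PosSemidef := by
    have := hY.conjTranspose_mul_mul_same Ξ
    simpa [Matrix.conjTranspose_eq_transpose_of_trivial] using this
  have hM' : Ξᵀ * S * Ξ = Matrix.diagonal μ + Y' := by
    rw [hSdef, hY'def]
    rw [Matrix.mul_add, Matrix.add_mul]
    congr 1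
    calc Ξᵀ * (Ξ * Matrix.diagonal μ * Ξᵀ) * Ξ
        = (Ξᵀ * Ξ) * Matrix.diagonal μ * (Ξᵀ * Ξ) := by
          simp only [Matrix.mul_assoc]
      _ = Matrix.diagonal μ := by rw [hΞ]; simp
  have htr : Matrix.trace ((Ξᵀ * S * Ξ)ᵀ * (Ξᵀ * S * Ξ)) = Matrix.trace (Sᵀ * S) := by
    calc Matrix.trace ((Ξᵀ * S * Ξ)ᵀ * (Ξᵀ * S * Ξ))
        = Matrix.trace (Ξᵀ * (Sᵀ * ((Ξ * Ξᵀ) * (S * Ξ)))) := by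
          simp only [Matrix.transpose_mul, Matrix.transpose_transpose, Matrix.mul_assoc]
      _ = Matrix.trace (Ξᵀ * (Sᵀ * (S * Ξ))) := by rw [hΞ']; simp
      _ = Matrix.trace ((Sᵀ * (S * Ξ)) * Ξᵀ) := Matrix.trace_mul_comm _ _
      _ = Matrix.trace (Sᵀ * (S * (Ξ * Ξᵀ))) := by simp only [Matrix.mul_assoc]
      _ = Matrix.trace (Sᵀ * S) := by rw [hΞ']; simp [Matrix.mul_assoc]
  rw [← htr, hM']
  set Q := Matrix.diagonal μ + Y' with hQdef
  rw [trace_tmul_eq_sum]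
  have hdiag : ∀ i, max (μ i) 0 ^ 2 ≤ (Q i i) ^ 2 := by
    intro i
    have hQii : Q i i = μ i + Y' i i := by
      simp [hQdef, Matrix.add_apply, Matrix.diagonal_apply_eq]
    have hy : 0 ≤ Y' i i := psd_diag_nonneg hY' i
    rw [hQii]
    rcases le_total (μ i) 0 with h | h
    · rw [max_eq_right h]; nlinarith [sq_nonneg (μ i + Y' i i)]
    · rw [max_eq_left h]; nlinarith
  calc ∑ i, max (μ i) 0 ^ 2 ≤ ∑ i, (Q i i) ^ 2 :=
        Finset.sum_le_sum fun i _ => hdiag i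
    _ ≤ ∑ j, ∑ i, (Q i j) ^ 2 := by
        refine Finset.sum_le_sum fun j _ => ?_
        exact Finset.single_le_sum (f := fun i => (Q i j) ^ 2)
          (fun i _ => sq_nonneg _) (Finset.mem_univ j)

theorem weighted_pHDMD_solution (nt M r s : ℕ)
    (T Z : Matrix (Fin nt) (Fin M) ℝ)
    (V₁ : Matrix (Fin nt) (Fin r) ℝ) (σ : Fin r → ℝ)
    (W₁ : Matrix (Fin M) (Fin r) ℝ) (W₂ : Matrix (Fin M) (Fin s) ℝ)
    (hσ : ∀ i, σ i ≠ 0)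
    (hV₁ : V₁ᵀ * V₁ = 1) (hW₁ : W₁ᵀ * W₁ = 1) (hW₂ : W₂ᵀ * W₂ = 1)
    (hW12 : W₁ᵀ * W₂ = 0) (hWfull : W₁ * W₁ᵀ + W₂ * W₂ᵀ = 1)
    (hT : T = V₁ * Matrix.diagonal σ * W₁ᵀ) (hrank : T.rank = r)
    (Z₁ : Matrix (Fin r) (Fin r) ℝ) (Z₂' : Matrix (Fin r) (Fin s) ℝ)
    (hZ₁ : Z₁ = Matrix.diagonal σ * V₁ᵀ * Z * W₁)
    (hZ₂ : Z₂' = Matrix.diagonal σ * V₁ᵀ * Z * W₂)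
    -- ordered eigendecomposition of Sym(Z̃₁):
    (Ξ : Matrix (Fin r) (Fin r) ℝ) (μ : Fin r → ℝ) (hΞ : Ξᵀ * Ξ = 1)
    (hSym : (1/2 : ℝ) • (Z₁ + Z₁ᵀ) = Ξ * Matrix.diagonal μ * Ξᵀ)
    (Jstar Rstar : Matrix (Fin nt) (Fin nt) ℝ)
    (hJstar : Jstar = V₁ * Matrix.diagonal (fun i => (σ i)⁻¹) *
      ((1/2 : ℝ) • (Z₁ - Z₁ᵀ)) * Matrix.diagonal (fun i => (σ i)⁻¹) * V₁ᵀ)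
    -- P(-Z̃₁) = Ξ diag(max(-μ,0)) Ξᵀ since Sym(-Z̃₁) = Ξ diag(-μ) Ξᵀ:
    (hRstar : Rstar = V₁ * Matrix.diagonal (fun i => (σ i)⁻¹) *
      (Ξ * Matrix.diagonal (fun i => max (-μ i) 0) * Ξᵀ) *
      Matrix.diagonal (fun i => (σ i)⁻¹) * V₁ᵀ) :
    Jstar = -Jstarᵀ ∧ Rstar.PosSemidef ∧
    (∀ J R : Matrix (Fin nt) (Fin nt) ℝ, J = -Jᵀ → R.PosSemidef →
      frob (Tᵀ * (Z - (Jstar - Rstar) * T)) ≤ frob (Tᵀ * (Z - (J - R) * T))) ∧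
    frob (Tᵀ * (Z - (Jstar - Rstar) * T)) ^ 2
      = frob Z₂' ^ 2 + ∑ i, (max (μ i) 0) ^ 2 := by
  set D : Matrix (Fin r) (Fin r) ℝ := Matrix.diagonal σ with hD
  set Di : Matrix (Fin r) (Fin r) ℝ := Matrix.diagonal (fun i => (σ i)⁻¹) with hDi
  have hDDi : D * Di = 1 := by
    rw [hD, hDi, Matrix.diagonal_mul_diagonal]
    convert Matrix.diagonal_one with i
    exact mul_inv_cancel₀ (hσ i)
  have hDiD : Di * D = 1 := by
    rw [hDi, hD, Matrix.diagonal_mul_diagonal]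
    convert Matrix.diagonal_one with i
    exact inv_mul_cancel₀ (hσ i)
  have hDT : Dᵀ = D := Matrix.diagonal_transpose σ
  have hW21 : W₂ᵀ * W₁ = 0 := by
    have := congrArg Matrix.transpose hW12
    simpa using this
  -- the key residual identity
  have key : ∀ A : Matrix (Fin nt) (Fin nt) ℝ,
      Tᵀ * (Z - A * T)
        = W₁ * (Z₁ - D * (V₁ᵀ * A * V₁) * D) * W₁ᵀ + W₁ * Z₂' * W₂ᵀ := by
    intro A
    have hZid : Z = Z * (W₁ * W₁ᵀ) + Z * (W₂ * W₂ᵀ) := by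
      rw [← Matrix.mul_add, hWfull, Matrix.mul_one]
    rw [hZ₁, hZ₂, hT]
    conv_lhs => rw [hZid]
    simp only [Matrix.transpose_mul, Matrix.diagonal_transpose, Matrix.transpose_transpose,
      Matrix.mul_sub, Matrix.sub_mul, Matrix.mul_add, Matrix.add_mul, Matrix.mul_assoc, hDT]
    abel
  -- trace of residual
  have traceEq : ∀ N : Matrix (Fin r) (Fin r) ℝ,
      Matrix.trace ((W₁ * N * W₁ᵀ + W₁ * Z₂' * W₂ᵀ)ᵀ * (W₁ * N * W₁ᵀ + W₁ * Z₂' * W₂ᵀ))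
        = Matrix.trace (Nᵀ * N) + Matrix.trace (Z₂'ᵀ * Z₂') := by
    intro N
    have h11 : ∀ {k : ℕ} (X : Matrix (Fin r) (Fin k) ℝ), W₁ᵀ * (W₁ * X) = X := by
      intro k X; rw [← Matrix.mul_assoc, hW₁, Matrix.one_mul]
    have h22 : ∀ {k : ℕ} (X : Matrix (Fin s) (Fin k) ℝ), W₂ᵀ * (W₂ * X) = X := by
      intro k X; rw [← Matrix.mul_assoc, hW₂, Matrix.one_mul]
    have h12 : ∀ {k : ℕ} (X : Matrix (Fin s) (Fin k) ℝ), W₁ᵀ * (W₂ * X) = 0 := by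
      intro k X; rw [← Matrix.mul_assoc, hW12, Matrix.zero_mul]
    have h21 : ∀ {k : ℕ} (X : Matrix (Fin r) (Fin k) ℝ), W₂ᵀ * (W₁ * X) = 0 := by
      intro k X; rw [← Matrix.mul_assoc, hW21, Matrix.zero_mul]
    simp only [Matrix.transpose_add, Matrix.transpose_mul, Matrix.transpose_transpose,
      Matrix.add_mul, Matrix.mul_add, Matrix.trace_add, Matrix.mul_assoc, h11, h12, h21, h22,
      Matrix.mul_zero, Matrix.zero_mul, Matrix.trace_zero]
    rw [Matrix.trace_mul_comm W₁, Matrix.trace_mul_comm W₁, Matrix.trace_mul_comm W₂,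
      Matrix.trace_mul_comm W₂]
    simp only [Matrix.mul_assoc, hW₁, hW₂, hW12, hW21, Matrix.mul_one, Matrix.mul_zero,
      Matrix.trace_zero, add_zero, zero_add]
  -- abbreviations
  set S₀ : Matrix (Fin r) (Fin r) ℝ := (1/2 : ℝ) • (Z₁ + Z₁ᵀ) with hS₀
  set K₀ : Matrix (Fin r) (Fin r) ℝ := (1/2 : ℝ) • (Z₁ - Z₁ᵀ) with hK₀
  have hS₀T : S₀ᵀ = S₀ := by
    rw [hS₀, Matrix.transpose_smul, Matrix.transpose_add, Matrix.transpose_transpose,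
      add_comm]
  have hK₀T : K₀ᵀ = -K₀ := by
    rw [hK₀, Matrix.transpose_smul, Matrix.transpose_sub, Matrix.transpose_transpose,
      ← smul_neg, neg_sub]
  have hZsum : Z₁ = S₀ + K₀ := by
    rw [hS₀, hK₀]; ext i j; simp [Matrix.add_apply, Matrix.sub_apply]; ring
  -- the value of D V₁ᵀ (Jstar - Rstar) V₁ D
  set Y₀ : Matrix (Fin r) (Fin r) ℝ :=
    Ξ * Matrix.diagonal (fun i => max (-μ i) 0) * Ξᵀ with hY₀
  have hsand : ∀ B : Matrix (Fin r) (Fin r) ℝ,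
      D * (V₁ᵀ * (V₁ * Di * B * Di * V₁ᵀ) * V₁) * D = B := by
    intro B
    have hv : ∀ {k : ℕ} (X : Matrix (Fin r) (Fin k) ℝ), V₁ᵀ * (V₁ * X) = X := by
      intro k X; rw [← Matrix.mul_assoc, hV₁, Matrix.one_mul]
    calc D * (V₁ᵀ * (V₁ * Di * B * Di * V₁ᵀ) * V₁) * D
        = D * (V₁ᵀ * (V₁ * (Di * (B * (Di * (V₁ᵀ * V₁)))))) * D := by
          simp only [Matrix.mul_assoc]
      _ = D * (Di * (B * Di)) * D := by rw [hV₁, Matrix.mul_one, hv]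
      _ = (D * Di) * B * (Di * D) := by simp only [Matrix.mul_assoc]
      _ = B := by rw [hDDi, hDiD, Matrix.one_mul, Matrix.mul_one]
  have hXstar : D * (V₁ᵀ * Jstar * V₁) * D = K₀ := by
    rw [hJstar]; exact hsand K₀
  have hYstar : D * (V₁ᵀ * Rstar * V₁) * D = Y₀ := by
    rw [hRstar]; exact hsand Y₀
  -- the optimal N
  have hNstar : Z₁ - D * (V₁ᵀ * (Jstar - Rstar) * V₁) * D
      = Ξ * Matrix.diagonal (fun i => max (μ i) 0) * Ξᵀ := by
    have expand : V₁ᵀ * (Jstar - Rstar) * V₁ = V₁ᵀ * Jstar * V₁ - V₁ᵀ * Rstar * V₁ := by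
      rw [Matrix.mul_sub, Matrix.sub_mul]
    rw [expand, Matrix.mul_sub, Matrix.sub_mul, hXstar, hYstar]
    have : Z₁ - (K₀ - Y₀) = S₀ + Y₀ := by
      rw [hZsum, hS₀, hK₀, hY₀]; abel
    rw [this, hSym, hY₀, ← Matrix.add_mul, ← Matrix.mul_add, Matrix.diagonal_add]
    have hfun : (fun i => μ i + max (-μ i) 0) = fun i => max (μ i) 0 := by
      funext i
      rcases le_total (μ i) 0 with h | h
      · rw [max_eq_right h, max_eq_left (by linarith : (0:ℝ) ≤ -μ i)]; ring
      · rw [max_eq_left h, max_eq_right (by linarith : -μ i ≤ (0:ℝ))]; ring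
    rw [hfun]
  -- value at the optimum
  have optval : Matrix.trace ((Ξ * Matrix.diagonal (fun i => max (μ i) 0) * Ξᵀ)ᵀ *
      (Ξ * Matrix.diagonal (fun i => max (μ i) 0) * Ξᵀ)) = ∑ i, max (μ i) 0 ^ 2 := by
    set dm := Matrix.diagonal (fun i => max (μ i) 0) with hdm
    have hdmT : dmᵀ = dm := Matrix.diagonal_transpose _
    calc Matrix.trace ((Ξ * dm * Ξᵀ)ᵀ * (Ξ * dm * Ξᵀ))
        = Matrix.trace (Ξ * (dm * ((Ξᵀ * Ξ) * (dm * Ξᵀ)))) := by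
          simp only [Matrix.transpose_mul, Matrix.transpose_transpose, hdmT, Matrix.mul_assoc]
      _ = Matrix.trace (Ξ * (dm * (dm * Ξᵀ))) := by rw [hΞ]; simp
      _ = Matrix.trace ((dm * (dm * Ξᵀ)) * Ξ) := Matrix.trace_mul_comm _ _
      _ = Matrix.trace (dm * (dm * (Ξᵀ * Ξ))) := by simp only [Matrix.mul_assoc]
      _ = Matrix.trace (dm * dm) := by rw [hΞ]; simp
      _ = ∑ i, max (μ i) 0 ^ 2 := by
          rw [hdm, Matrix.diagonal_mul_diagonal, Matrix.trace_diagonal]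
          simp [sq]
  have optTrace : Matrix.trace ((Tᵀ * (Z - (Jstar - Rstar) * T))ᵀ *
      (Tᵀ * (Z - (Jstar - Rstar) * T)))
      = ∑ i, max (μ i) 0 ^ 2 + Matrix.trace (Z₂'ᵀ * Z₂') := by
    rw [key (Jstar - Rstar), traceEq, hNstar, optval]
  refine ⟨?_, ?_, ?_, ?_⟩
  · -- Jstar skew
    rw [hJstar]
    have hDiT : Diᵀ = Di := Matrix.diagonal_transpose _
    simp only [Matrix.transpose_mul, Matrix.transpose_transpose, hDiT, hK₀T,
      Matrix.mul_neg, Matrix.neg_mul, neg_neg, Matrix.mul_assoc]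
  · -- Rstar PSD
    have hform : Rstar = (V₁ * Di * Ξ) * Matrix.diagonal (fun i => max (-μ i) 0) *
        (V₁ * Di * Ξ)ᴴ := by
      rw [hRstar, Matrix.conjTranspose_eq_transpose_of_trivial]
      simp only [hY₀, Matrix.transpose_mul, Matrix.diagonal_transpose, Matrix.mul_assoc, hDi]
    rw [hform]
    exact (Matrix.PosSemidef.diagonal fun i => le_max_right (-μ i) 0).mul_mul_conjTranspose_same _
  · -- minimality
    intro J R hJ hR
    have hJT : Jᵀ = -J := by nth_rewrite 1 [hJ]; simp
    have hRT : Rᵀ = R := by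
      have := hR.isHermitian
      rw [Matrix.IsHermitian, Matrix.conjTranspose_eq_transpose_of_trivial] at this
      exact this
    set X : Matrix (Fin r) (Fin r) ℝ := D * (V₁ᵀ * J * V₁) * D with hX
    set Y : Matrix (Fin r) (Fin r) ℝ := D * (V₁ᵀ * R * V₁) * D with hYdef
    have hXT : Xᵀ = -X := by
      rw [hX]
      simp only [Matrix.transpose_mul, Matrix.transpose_transpose, hDT, hJT,
        Matrix.mul_neg, Matrix.neg_mul, Matrix.mul_assoc]
    have hYT : Yᵀ = Y := by
      rw [hYdef]
      simp only [Matrix.transpose_mul, Matrix.transpose_transpose, hDT, hRT, Matrix.mul_assoc]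
    have hYpsd : Y.PosSemidef := by
      have hform : Y = (V₁ * D)ᴴ * R * (V₁ * D) := by
        rw [hYdef, Matrix.conjTranspose_eq_transpose_of_trivial]
        simp only [Matrix.transpose_mul, hDT, Matrix.mul_assoc]
      rw [hform]
      exact hR.conjTranspose_mul_mul_same _
    have hN : Z₁ - D * (V₁ᵀ * (J - R) * V₁) * D = (S₀ + Y) + (K₀ - X) := by
      have expand : V₁ᵀ * (J - R) * V₁ = V₁ᵀ * J * V₁ - V₁ᵀ * R * V₁ := by
        rw [Matrix.mul_sub, Matrix.sub_mul]
      rw [expand, Matrix.mul_sub, Matrix.sub_mul, ← hX, ← hYdef, hZsum]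
      abel
    have hbound : ∑ i, max (μ i) 0 ^ 2
        ≤ Matrix.trace ((Z₁ - D * (V₁ᵀ * (J - R) * V₁) * D)ᵀ *
            (Z₁ - D * (V₁ᵀ * (J - R) * V₁) * D)) := by
      rw [hN, trace_sym_skew (S₀ + Y) (K₀ - X)
        (by rw [Matrix.transpose_add, hS₀T, hYT])
        (by rw [Matrix.transpose_sub, hK₀T, hXT, neg_sub]; abel)]
      have h1 : ∑ i, max (μ i) 0 ^ 2 ≤ Matrix.trace ((S₀ + Y)ᵀ * (S₀ + Y)) := by
        have := psd_bound Ξ μ hΞ Y hYpsd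
        rwa [← hSym] at this
      have h2 : 0 ≤ Matrix.trace ((K₀ - X)ᵀ * (K₀ - X)) := trace_tmul_nonneg _
      linarith
    unfold frob
    apply Real.sqrt_le_sqrt
    rw [key (Jstar - Rstar), key (J - R), traceEq, traceEq, hNstar, optval]
    linarith
  · -- optimal value
    rw [frob_sq, optTrace, frob_sq]
    ring
end

section
/- The minimizers J* and R* from the weighted port-Hamiltonian DMD problem are the minimum-Frobenius-norm minimizers: if J is any skew-symmetric minimizer and R any PSD minimizer of ‖Tᵀ(Z − (J − R)T)‖_F, then ‖J‖_F ≥ ‖J*‖_F and ‖R‖_F ≥ ‖R*‖_F. -/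
open Matrix

noncomputable def frobSq {n m : ℕ} (A : Matrix (Fin n) (Fin m) ℝ) : ℝ :=
  Matrix.trace (Aᵀ * A)

lemma frobSq_eq_sum {n m : ℕ} (A : Matrix (Fin n) (Fin m) ℝ) :
    frobSq A = ∑ j, ∑ i, (A i j)^2 := by
  simp [frobSq, Matrix.trace, Matrix.diag, Matrix.mul_apply, sq]

lemma frobSq_nonneg {n m : ℕ} (A : Matrix (Fin n) (Fin m) ℝ) : 0 ≤ frobSq A := by
  rw [frobSq_eq_sum]
  exact Finset.sum_nonneg fun j _ => Finset.sum_nonneg fun i _ => sq_nonneg _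

lemma frobSq_eq_zero {n m : ℕ} {A : Matrix (Fin n) (Fin m) ℝ} (h : frobSq A ≤ 0) : A = 0 := by
  rw [frobSq_eq_sum] at h
  have h' : ∑ j, ∑ i, (A i j)^2 = 0 :=
    le_antisymm h (Finset.sum_nonneg fun j _ => Finset.sum_nonneg fun i _ => sq_nonneg _)
  ext i j
  have hj := (Finset.sum_eq_zero_iff_of_nonneg
    (fun j _ => Finset.sum_nonneg fun i _ => sq_nonneg (A i j))).mp h' j (Finset.mem_univ j)
  have hij := (Finset.sum_eq_zero_iff_of_nonneg (fun i _ => sq_nonneg (A i j))).mp hj i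
    (Finset.mem_univ i)
  simpa using pow_eq_zero_iff (n := 2) (by norm_num) |>.mp hij

lemma frob_eq {n m : ℕ} (A : Matrix (Fin n) (Fin m) ℝ) : frob A = Real.sqrt (frobSq A) := rfl

lemma frob_le_frob {n m n' m' : ℕ} {A : Matrix (Fin n) (Fin m) ℝ}
    {B : Matrix (Fin n') (Fin m') ℝ} (h : frobSq A ≤ frobSq B) : frob A ≤ frob B :=
  Real.sqrt_le_sqrt h

lemma frobSq_le_of_frob {n m n' m' : ℕ} {A : Matrix (Fin n) (Fin m) ℝ}
    {B : Matrix (Fin n') (Fin m') ℝ} (h : frob A ≤ frob B) : frobSq A ≤ frobSq B :=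
  calc frobSq A = (Real.sqrt (frobSq A))^2 := (Real.sq_sqrt (frobSq_nonneg A)).symm
    _ ≤ (Real.sqrt (frobSq B))^2 := pow_le_pow_left₀ (Real.sqrt_nonneg _) h 2
    _ = frobSq B := Real.sq_sqrt (frobSq_nonneg B)

lemma frobSq_transpose {n m : ℕ} (A : Matrix (Fin n) (Fin m) ℝ) : frobSq Aᵀ = frobSq A := by
  simp only [frobSq, transpose_transpose]
  exact Matrix.trace_mul_comm A Aᵀ

lemma frobSq_mul_left_iso {n m r : ℕ} {C : Matrix (Fin n) (Fin r) ℝ}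
    (hC : Cᵀ * C = 1) (A : Matrix (Fin r) (Fin m) ℝ) : frobSq (C * A) = frobSq A := by
  simp only [frobSq, transpose_mul]
  rw [Matrix.mul_assoc, ← Matrix.mul_assoc Cᵀ, hC, Matrix.one_mul]

lemma frobSq_mul_right_iso {n m r : ℕ} {C : Matrix (Fin m) (Fin r) ℝ}
    (hC : Cᵀ * C = 1) (A : Matrix (Fin n) (Fin r) ℝ) : frobSq (A * Cᵀ) = frobSq A := by
  rw [← frobSq_transpose (A * Cᵀ), transpose_mul, transpose_transpose,
    frobSq_mul_left_iso hC, frobSq_transpose]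

lemma frobSq_submul_left {n m r : ℕ} {C : Matrix (Fin n) (Fin r) ℝ}
    (hC : Cᵀ * C = 1) (A : Matrix (Fin n) (Fin m) ℝ) : frobSq (Cᵀ * A) ≤ frobSq A := by
  set Q : Matrix (Fin n) (Fin n) ℝ := 1 - C * Cᵀ with hQdef
  have hPP : (C * Cᵀ) * (C * Cᵀ) = C * Cᵀ := by
    rw [Matrix.mul_assoc, ← Matrix.mul_assoc Cᵀ, hC, Matrix.one_mul]
  have hQQ : Q * Q = Q := by
    rw [hQdef, sub_mul, mul_sub, mul_sub]
    simp only [one_mul, mul_one, hPP]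
    abel
  have hQT : Qᵀ = Q := by
    rw [hQdef, transpose_sub, transpose_one, transpose_mul, transpose_transpose]
  have key : frobSq A = frobSq (Cᵀ * A) + frobSq (Q * A) := by
    have hQA : (Q * A)ᵀ * (Q * A) = Aᵀ * A - Aᵀ * (C * (Cᵀ * A)) := by
      rw [transpose_mul, hQT, Matrix.mul_assoc, ← Matrix.mul_assoc Q, hQQ, hQdef,
        Matrix.sub_mul, Matrix.one_mul, Matrix.mul_sub, Matrix.mul_assoc]
    have hCA : (Cᵀ * A)ᵀ * (Cᵀ * A) = Aᵀ * (C * (Cᵀ * A)) := by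
      rw [transpose_mul, transpose_transpose, Matrix.mul_assoc]
    simp only [frobSq, hQA, hCA, Matrix.trace_sub]
    ring
  linarith [frobSq_nonneg (Q * A)]

lemma frobSq_conj_le {n r : ℕ} {C : Matrix (Fin n) (Fin r) ℝ}
    (hC : Cᵀ * C = 1) (A : Matrix (Fin n) (Fin n) ℝ) : frobSq (Cᵀ * A * C) ≤ frobSq A := by
  calc frobSq (Cᵀ * A * C) = frobSq ((Cᵀ * A * C)ᵀ) := (frobSq_transpose _).symm
    _ = frobSq (Cᵀ * (Cᵀ * A)ᵀ) := by rw [transpose_mul]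
    _ ≤ frobSq ((Cᵀ * A)ᵀ) := frobSq_submul_left hC _
    _ = frobSq (Cᵀ * A) := frobSq_transpose _
    _ ≤ frobSq A := frobSq_submul_left hC A

lemma frobSq_conj_eq {n r : ℕ} {C : Matrix (Fin n) (Fin r) ℝ}
    (hC : Cᵀ * C = 1) (A : Matrix (Fin r) (Fin r) ℝ) : frobSq (C * A * Cᵀ) = frobSq A := by
  rw [Matrix.mul_assoc, frobSq_mul_left_iso hC, frobSq_mul_right_iso hC]

lemma frobSq_diagonal {r : ℕ} (v : Fin r → ℝ) : frobSq (Matrix.diagonal v) = ∑ i, (v i)^2 := by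
  rw [frobSq_eq_sum]
  rw [Finset.sum_comm]
  apply Finset.sum_congr rfl
  intro i _
  rw [Finset.sum_eq_single i]
  · simp [Matrix.diagonal_apply_eq]
  · intro j _ hj
    simp [Matrix.diagonal_apply_ne' _ hj]
  · simp

lemma frobSq_sym_skew {n : ℕ} {X Y : Matrix (Fin n) (Fin n) ℝ}
    (hX : Xᵀ = X) (hY : Yᵀ = -Y) : frobSq (X + Y) = frobSq X + frobSq Y := by
  simp only [frobSq, transpose_add, Matrix.add_mul, Matrix.mul_add, Matrix.trace_add]
  have h1 : Matrix.trace (Xᵀ * Y) = Matrix.trace (X * Y) := by rw [hX]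
  have h2 : Matrix.trace (Yᵀ * X) = -Matrix.trace (X * Y) := by
    rw [hY, Matrix.neg_mul, Matrix.trace_neg, Matrix.trace_mul_comm]
  rw [h1, h2]
  ring

lemma sq_max_le {p m : ℝ} (hp : 0 ≤ p) : (max m 0)^2 ≤ (m + p)^2 := by
  rcases le_total m 0 with h|h
  · rw [max_eq_right h]; simpa using sq_nonneg (m + p)
  · rw [max_eq_left h]; nlinarith

lemma eq_of_sq_max {p m : ℝ} (hp : 0 ≤ p) (h : (m + p)^2 ≤ (max m 0)^2) : p = max (-m) 0 := by
  rcases le_total m 0 with h'|h'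
  · rw [max_eq_right h'] at h; rw [max_eq_left (neg_nonneg.mpr h')]; nlinarith
  · rw [max_eq_left h'] at h; rw [max_eq_right (neg_nonpos.mpr h')]; nlinarith

lemma psd_key {r : ℕ} (μ : Fin r → ℝ) {P : Matrix (Fin r) (Fin r) ℝ} (hP : P.PosSemidef) :
    (∑ i, (max (μ i) 0)^2) ≤ frobSq (Matrix.diagonal μ + P) ∧
    (frobSq (Matrix.diagonal μ + P) ≤ ∑ i, (max (μ i) 0)^2 →
      P = Matrix.diagonal fun i => max (-μ i) 0) := by
  set Mm : Matrix (Fin r) (Fin r) ℝ := Matrix.diagonal μ + P with hMm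
  have hdiag : ∀ j, Mm j j = μ j + P j j := by
    intro j; simp [hMm, Matrix.diagonal_apply_eq]
  have hsq : ∀ j, (Mm j j)^2 ≤ ∑ i, (Mm i j)^2 := by
    intro j
    exact Finset.single_le_sum (fun i _ => sq_nonneg (Mm i j)) (Finset.mem_univ j)
  have hba : ∀ j, (max (μ j) 0)^2 ≤ ∑ i, (Mm i j)^2 := by
    intro j
    refine le_trans ?_ (hsq j)
    rw [hdiag j]
    exact sq_max_le (psd_diag_nonneg hP j)
  have hfr : frobSq Mm = ∑ j, ∑ i, (Mm i j)^2 := frobSq_eq_sum Mm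
  constructor
  · rw [hfr]
    exact Finset.sum_le_sum fun j _ => hba j
  · intro hle
    rw [hfr] at hle
    have hcol : ∀ j, ∑ i, (Mm i j)^2 = (max (μ j) 0)^2 := by
      intro j
      have h0 : ∑ j, ((∑ i, (Mm i j)^2) - (max (μ j) 0)^2) = 0 := by
        have h1 : ∑ j, ((∑ i, (Mm i j)^2) - (max (μ j) 0)^2)
            = (∑ j, ∑ i, (Mm i j)^2) - ∑ j, (max (μ j) 0)^2 := by
          rw [Finset.sum_sub_distrib]
        have h2 : (0:ℝ) ≤ ∑ j, ((∑ i, (Mm i j)^2) - (max (μ j) 0)^2) :=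
          Finset.sum_nonneg fun j _ => sub_nonneg.mpr (hba j)
        linarith
      have := (Finset.sum_eq_zero_iff_of_nonneg
        (fun j _ => sub_nonneg.mpr (hba j))).mp h0 j (Finset.mem_univ j)
      linarith [this]
    have hPdiag : ∀ j, P j j = max (-μ j) 0 := by
      intro j
      apply eq_of_sq_max (psd_diag_nonneg hP j)
      rw [← hdiag j, ← hcol j]
      exact hsq j
    have hMMjj : ∀ j, (Mm j j)^2 = (max (μ j) 0)^2 := by
      intro j
      refine le_antisymm (le_trans (le_of_eq rfl) ?_) ?_
      · rw [← hcol j] at *; exact hsq j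
      · rw [hdiag j]; exact sq_max_le (psd_diag_nonneg hP j)
    have hoff : ∀ i j, i ≠ j → Mm i j = 0 := by
      intro i j hij
      have hsplit : (Mm j j)^2 + ∑ i ∈ Finset.univ.erase j, (Mm i j)^2 = ∑ i, (Mm i j)^2 :=
        Finset.add_sum_erase Finset.univ (fun i => (Mm i j)^2) (Finset.mem_univ j)
      have hzero : ∑ i ∈ Finset.univ.erase j, (Mm i j)^2 = 0 := by
        have := hcol j
        have := hMMjj j
        linarith
      have := (Finset.sum_eq_zero_iff_of_nonneg
        (fun i _ => sq_nonneg (Mm i j))).mp hzero i (Finset.mem_erase.mpr ⟨hij, Finset.mem_univ i⟩)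
      exact pow_eq_zero_iff (n := 2) (by norm_num) |>.mp this
    ext i j
    by_cases hij : i = j
    · subst hij
      simp [Matrix.diagonal_apply_eq, hPdiag i]
    · have hM0 := hoff i j hij
      have : P i j = Mm i j - Matrix.diagonal μ i j := by simp [hMm]
      rw [this, hM0, Matrix.diagonal_apply_ne _ hij]
      simp [Matrix.diagonal_apply_ne _ hij]

lemma frobSq_sub_expand {n m : ℕ} (X Y : Matrix (Fin n) (Fin m) ℝ) :
    frobSq (X - Y) = frobSq X - Matrix.trace (Xᵀ * Y) - Matrix.trace (Yᵀ * X) + frobSq Y := by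
  simp only [frobSq, transpose_sub, Matrix.sub_mul, Matrix.mul_sub, Matrix.trace_sub]
  ring

lemma trace_helper1 {r M : ℕ} (E : Matrix (Fin r) (Fin M) ℝ) (B : Matrix (Fin r) (Fin r) ℝ)
    (W₁ : Matrix (Fin M) (Fin r) ℝ) :
    Matrix.trace (Eᵀ * (B * W₁ᵀ)) = Matrix.trace ((E * W₁)ᵀ * B) := by
  rw [transpose_mul, Matrix.mul_assoc W₁ᵀ, Matrix.trace_mul_comm W₁ᵀ, Matrix.mul_assoc]

lemma trace_helper2 {r M : ℕ} (E : Matrix (Fin r) (Fin M) ℝ) (B : Matrix (Fin r) (Fin r) ℝ)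
    (W₁ : Matrix (Fin M) (Fin r) ℝ) :
    Matrix.trace ((B * W₁ᵀ)ᵀ * E) = Matrix.trace (Bᵀ * (E * W₁)) := by
  rw [transpose_mul, transpose_transpose, Matrix.mul_assoc W₁, Matrix.trace_mul_comm W₁,
    Matrix.mul_assoc Bᵀ]

lemma obj_eq {nt M r : ℕ} (V₁ : Matrix (Fin nt) (Fin r) ℝ) (W₁ : Matrix (Fin M) (Fin r) ℝ)
    (D : Matrix (Fin r) (Fin r) ℝ) (hD : Dᵀ = D) (hW₁ : W₁ᵀ * W₁ = 1)
    (Z : Matrix (Fin nt) (Fin M) ℝ) (X : Matrix (Fin nt) (Fin nt) ℝ) :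
    frobSq ((V₁ * D * W₁ᵀ)ᵀ * (Z - X * (V₁ * D * W₁ᵀ)))
      = frobSq ((D * V₁ᵀ * Z * W₁) - (D * V₁ᵀ * X * V₁ * D))
        + (frobSq (D * V₁ᵀ * Z) - frobSq (D * V₁ᵀ * Z * W₁)) := by
  set E : Matrix (Fin r) (Fin M) ℝ := D * V₁ᵀ * Z with hE
  set B : Matrix (Fin r) (Fin r) ℝ := D * V₁ᵀ * X * V₁ * D with hB
  have step1 : (V₁ * D * W₁ᵀ)ᵀ * (Z - X * (V₁ * D * W₁ᵀ)) = W₁ * (E - B * W₁ᵀ) := by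
    rw [hE, hB]
    simp only [transpose_mul, transpose_transpose, hD, Matrix.mul_sub, Matrix.mul_assoc]
  have hZ1 : D * V₁ᵀ * Z * W₁ = E * W₁ := by rw [hE]
  rw [step1, frobSq_mul_left_iso hW₁, hZ1]
  rw [frobSq_sub_expand E (B * W₁ᵀ), frobSq_sub_expand (E * W₁) B]
  have e1 := trace_helper1 E B W₁
  have e2 := trace_helper2 E B W₁
  have e3 : frobSq (B * W₁ᵀ) = frobSq B := frobSq_mul_right_iso hW₁ B
  rw [e1, e2, e3]
  ring

lemma add_max_neg (m : ℝ) : m + max (-m) 0 = max m 0 := by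
  rcases le_total m 0 with h|h
  · rw [max_eq_left (neg_nonneg.2 h), max_eq_right h]; ring
  · rw [max_eq_right (neg_nonpos.2 h), max_eq_left h]; ring

theorem weighted_pHDMD_minimum_norm (nt M r s : ℕ)
    (T Z : Matrix (Fin nt) (Fin M) ℝ)
    (V₁ : Matrix (Fin nt) (Fin r) ℝ) (σ : Fin r → ℝ)
    (W₁ : Matrix (Fin M) (Fin r) ℝ)
    (hσ : ∀ i, σ i ≠ 0)
    (hV₁ : V₁ᵀ * V₁ = 1) (hW₁ : W₁ᵀ * W₁ = 1)
    (hT : T = V₁ * Matrix.diagonal σ * W₁ᵀ) (hrank : T.rank = r)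
    (Z₁ : Matrix (Fin r) (Fin r) ℝ)
    (hZ₁ : Z₁ = Matrix.diagonal σ * V₁ᵀ * Z * W₁)
    (Ξ : Matrix (Fin r) (Fin r) ℝ) (μ : Fin r → ℝ) (hΞ : Ξᵀ * Ξ = 1)
    (hSym : (1/2 : ℝ) • (Z₁ + Z₁ᵀ) = Ξ * Matrix.diagonal μ * Ξᵀ)
    (Jstar Rstar : Matrix (Fin nt) (Fin nt) ℝ)
    (hJstar : Jstar = V₁ * Matrix.diagonal (fun i => (σ i)⁻¹) *
      ((1/2 : ℝ) • (Z₁ - Z₁ᵀ)) * Matrix.diagonal (fun i => (σ i)⁻¹) * V₁ᵀ)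
    (hRstar : Rstar = V₁ * Matrix.diagonal (fun i => (σ i)⁻¹) *
      (Ξ * Matrix.diagonal (fun i => max (-μ i) 0) * Ξᵀ) *
      Matrix.diagonal (fun i => (σ i)⁻¹) * V₁ᵀ) :
    ∀ J R : Matrix (Fin nt) (Fin nt) ℝ, J = -Jᵀ → R.PosSemidef →
      (∀ J' R' : Matrix (Fin nt) (Fin nt) ℝ, J' = -J'ᵀ → R'.PosSemidef →
        frob (Tᵀ * (Z - (J - R) * T)) ≤ frob (Tᵀ * (Z - (J' - R') * T))) →
      frob Jstar ≤ frob J ∧ frob Rstar ≤ frob R := by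
  intro J R hJ hR hmin
  -- notation
  set D : Matrix (Fin r) (Fin r) ℝ := Matrix.diagonal σ with hDdef
  set Di : Matrix (Fin r) (Fin r) ℝ := Matrix.diagonal (fun i => (σ i)⁻¹) with hDidef
  set K : Matrix (Fin r) (Fin r) ℝ := (1/2 : ℝ) • (Z₁ - Z₁ᵀ) with hKdef
  set S : Matrix (Fin r) (Fin r) ℝ := (1/2 : ℝ) • (Z₁ + Z₁ᵀ) with hSdef
  set ν : Fin r → ℝ := fun i => max (-μ i) 0 with hνdef
  set N : Matrix (Fin r) (Fin r) ℝ := Ξ * Matrix.diagonal ν * Ξᵀ with hNdef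
  have hD : Dᵀ = D := Matrix.diagonal_transpose σ
  have hDi : Diᵀ = Di := Matrix.diagonal_transpose _
  have hDDi : D * Di = 1 := by
    rw [hDdef, hDidef, Matrix.diagonal_mul_diagonal, ← Matrix.diagonal_one]
    exact congrArg Matrix.diagonal (funext fun i => mul_inv_cancel₀ (hσ i))
  have hDiD : Di * D = 1 := by
    rw [hDidef, hDdef, Matrix.diagonal_mul_diagonal, ← Matrix.diagonal_one]
    exact congrArg Matrix.diagonal (funext fun i => inv_mul_cancel₀ (hσ i))
  have hΞ2 : Ξ * Ξᵀ = 1 := mul_eq_one_comm.mp hΞ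
  -- cancellation helpers
  have cV : ∀ {k : ℕ} (X : Matrix (Fin r) (Fin k) ℝ), V₁ᵀ * (V₁ * X) = X := by
    intro k X; rw [← Matrix.mul_assoc, hV₁, Matrix.one_mul]
  have cD : ∀ {k : ℕ} (X : Matrix (Fin r) (Fin k) ℝ), D * (Di * X) = X := by
    intro k X; rw [← Matrix.mul_assoc, hDDi, Matrix.one_mul]
  have cD' : ∀ {k : ℕ} (X : Matrix (Fin r) (Fin k) ℝ), Di * (D * X) = X := by
    intro k X; rw [← Matrix.mul_assoc, hDiD, Matrix.one_mul]
  have cΞ2 : ∀ {k : ℕ} (X : Matrix (Fin r) (Fin k) ℝ), Ξ * (Ξᵀ * X) = X := by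
    intro k X; rw [← Matrix.mul_assoc, hΞ2, Matrix.one_mul]
  -- basic symmetry facts
  have hKT : Kᵀ = -K := by
    rw [hKdef, transpose_smul, transpose_sub, transpose_transpose]
    module
  have hST : Sᵀ = S := by
    rw [hSdef, transpose_smul, transpose_add, transpose_transpose]
    module
  have hJT : Jᵀ = -J := by
    conv_lhs => rw [hJ]
    simp
  have hRT : Rᵀ = R := by
    rw [← Matrix.conjTranspose_eq_transpose_of_trivial]
    exact hR.1
  -- Jstar is admissible
  have hJstarT : Jstar = -Jstarᵀ := by
    rw [hJstar]
    simp only [transpose_mul, transpose_transpose, hDi, hKT, Matrix.mul_neg, Matrix.neg_mul,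
      Matrix.mul_assoc, neg_neg]
  -- Rstar is admissible
  have hRstar' : Rstar = (V₁ * Di * Ξ) * Matrix.diagonal ν * (V₁ * Di * Ξ)ᵀ := by
    rw [hRstar]
    simp only [hNdef, transpose_mul, transpose_transpose, hDi, Matrix.mul_assoc]
  have hRstarPSD : Rstar.PosSemidef := by
    rw [hRstar']
    have hdiagPSD : (Matrix.diagonal ν).PosSemidef :=
      Matrix.PosSemidef.diagonal (fun i => le_max_right _ _)
    have := hdiagPSD.mul_mul_conjTranspose_same (V₁ * Di * Ξ)
    rwa [Matrix.conjTranspose_eq_transpose_of_trivial] at this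
  -- objective identity
  have hobj : ∀ X : Matrix (Fin nt) (Fin nt) ℝ,
      frobSq (Tᵀ * (Z - X * T)) = frobSq (Z₁ - D * V₁ᵀ * X * V₁ * D)
        + (frobSq (D * V₁ᵀ * Z) - frobSq Z₁) := by
    intro X
    rw [hT, hZ₁]
    exact obj_eq V₁ W₁ D hD hW₁ Z X
  -- use minimality against (Jstar, Rstar)
  have hmin' := hmin Jstar Rstar hJstarT hRstarPSD
  have hsq := frobSq_le_of_frob hmin'
  rw [hobj (J - R), hobj (Jstar - Rstar)] at hsq
  have hsq2 : frobSq (Z₁ - D * V₁ᵀ * (J - R) * V₁ * D)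
      ≤ frobSq (Z₁ - D * V₁ᵀ * (Jstar - Rstar) * V₁ * D) := by linarith
  -- compute the transformed star matrices
  have hBJstar : D * V₁ᵀ * Jstar * V₁ * D = K := by
    rw [hJstar]
    simp only [Matrix.mul_assoc, cV, cD, hDiD, Matrix.mul_one]
  have hBRstar : D * V₁ᵀ * Rstar * V₁ * D = N := by
    rw [hRstar]
    simp only [Matrix.mul_assoc, cV, cD, hDiD, Matrix.mul_one]
  have hBstar : D * V₁ᵀ * (Jstar - Rstar) * V₁ * D = K - N := by
    simp only [Matrix.mul_sub, Matrix.sub_mul]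
    rw [hBJstar, hBRstar]
  -- transformed J, R
  set Jt : Matrix (Fin r) (Fin r) ℝ := D * V₁ᵀ * J * V₁ * D with hJtdef
  set Rt : Matrix (Fin r) (Fin r) ℝ := D * V₁ᵀ * R * V₁ * D with hRtdef
  have hB : D * V₁ᵀ * (J - R) * V₁ * D = Jt - Rt := by
    simp only [Matrix.mul_sub, Matrix.sub_mul]
    rfl
  have hJtT : Jtᵀ = -Jt := by
    rw [hJtdef]
    simp only [transpose_mul, transpose_transpose, hD, hJT, Matrix.mul_neg, Matrix.neg_mul,
      Matrix.mul_assoc]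
  have hRtT : Rtᵀ = Rt := by
    rw [hRtdef]
    simp only [transpose_mul, transpose_transpose, hD, hRT, Matrix.mul_assoc]
  -- split objective into symmetric and skew parts
  have hZSK : S + K = Z₁ := by
    rw [hSdef, hKdef]
    module
  have hLHS : Z₁ - (Jt - Rt) = (S + Rt) + (K - Jt) := by
    rw [← hZSK]; abel
  have hRHS : Z₁ - (K - N) = S + N := by
    rw [← hZSK]; abel
  have hKJt : (K - Jt)ᵀ = -(K - Jt) := by
    rw [transpose_sub, hKT, hJtT]; abel
  have hSRt : (S + Rt)ᵀ = S + Rt := by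
    rw [transpose_add, hST, hRtT]
  -- P in the eigenbasis
  set P : Matrix (Fin r) (Fin r) ℝ := Ξᵀ * Rt * Ξ with hPdef
  have hPpsd : P.PosSemidef := by
    have h := hR.conjTranspose_mul_mul_same (V₁ * D * Ξ)
    rw [Matrix.conjTranspose_eq_transpose_of_trivial] at h
    have : P = (V₁ * D * Ξ)ᵀ * R * (V₁ * D * Ξ) := by
      rw [hPdef, hRtdef]
      simp only [transpose_mul, transpose_transpose, hD, Matrix.mul_assoc]
    rwa [this]
  have hRtP : Ξ * P * Ξᵀ = Rt := by
    rw [hPdef]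
    simp only [Matrix.mul_assoc, cΞ2, hΞ2, Matrix.mul_one]
  have hSR : S + Rt = Ξ * (Matrix.diagonal μ + P) * Ξᵀ := by
    rw [Matrix.mul_add, Matrix.add_mul, hRtP, hSym]
  have hSN : S + N = Ξ * (Matrix.diagonal μ + Matrix.diagonal ν) * Ξᵀ := by
    rw [Matrix.mul_add, Matrix.add_mul, hSym, hNdef]
  -- numeric value of RHS
  have hRHSval : frobSq (Z₁ - (K - N)) = ∑ i, (max (μ i) 0)^2 := by
    rw [hRHS, hSN, frobSq_conj_eq hΞ, Matrix.diagonal_add, frobSq_diagonal]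
    apply Finset.sum_congr rfl
    intro i _
    rw [add_max_neg (μ i)]
  -- main inequality chain
  rw [hB, hBstar, hRHSval, hLHS, frobSq_sym_skew hSRt hKJt, hSR, frobSq_conj_eq hΞ] at hsq2
  have hkey := psd_key μ hPpsd
  have hKJ0 : frobSq (K - Jt) ≤ 0 := by linarith [hkey.1]
  have hJtK : Jt = K := by
    have := frobSq_eq_zero hKJ0
    have := sub_eq_zero.mp this
    exact this.symm
  have hPν : P = Matrix.diagonal ν := by
    apply hkey.2
    linarith [frobSq_nonneg (K - Jt)]
  have hRtN : Rt = N := by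
    rw [← hRtP, hPν, hNdef]
  -- recover the blocks
  have hback : ∀ X : Matrix (Fin nt) (Fin nt) ℝ,
      Di * (D * V₁ᵀ * X * V₁ * D) * Di = V₁ᵀ * X * V₁ := by
    intro X
    simp only [Matrix.mul_assoc, cD', hDDi, Matrix.mul_one]
  have hJblock : Di * K * Di = V₁ᵀ * J * V₁ := by
    rw [← hJtK, hJtdef]
    exact hback J
  have hRblock : Di * N * Di = V₁ᵀ * R * V₁ := by
    rw [← hRtN, hRtdef]
    exact hback R
  -- conclude
  constructor
  · apply frob_le_frob
    have h1 : Jstar = V₁ * (Di * K * Di) * V₁ᵀ := by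
      rw [hJstar]
      simp only [Matrix.mul_assoc]
    rw [h1, frobSq_conj_eq hV₁, hJblock]
    exact frobSq_conj_le hV₁ J
  · apply frob_le_frob
    have h1 : Rstar = V₁ * (Di * N * Di) * V₁ᵀ := by
      rw [hRstar]
      simp only [Matrix.mul_assoc]
    rw [h1, frobSq_conj_eq hV₁, hRblock]
    exact frobSq_conj_le hV₁ R
end
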